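/- For every μ ∈ ℂ, the bilinear form B on the toroidal extended affine Lie algebra g_div(μ) = (R⊗ġ) ⊕ K ⊕ D_div is symmetric and invariant: B([x,y],z) = B(x,[y,z]) for all x, y, z ∈ g_div(μ). -/

import Mathlib

noncomputable section

/-- Index set `{0, 1, ..., N}` for the variables of the torus. -/
abbrev TorIdx (N : ℕ) := Fin (N + 1)

/-- Laurent polynomials `ℂ[t₀^{±1}, ..., t_N^{±1}]`, realized as finitely supported
functions on the lattice `ℤ^{N+1}` of exponents (Fourier basis). -/
abbrev TorR (N : ℕ) := (TorIdx N → ℤ) →₀ ℂ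

/-- The monomial `t^r = t₀^{r₀} ⋯ t_N^{r_N}`. -/
def tpow {N : ℕ} (r : TorIdx N → ℤ) : TorR N := Finsupp.single r 1

/-- Multiplication of Laurent polynomials. -/
def rmul {N : ℕ} (f g : TorR N) : TorR N :=
  f.sum fun r a => g.sum fun m b => Finsupp.single (r + m) (a * b)

/-- The derivation `d_p = t_p ∂/∂t_p`, acting on monomials by `d_p (t^r) = r_p t^r`. -/
def dOp {N : ℕ} (p : TorIdx N) : TorR N →ₗ[ℂ] TorR N :=
  Finsupp.lsum ℂ fun r => (r p : ℂ) • Finsupp.lsingle r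

/-- The space `Ω_R` of 1-forms on the torus: the free `R`-module with basis `k₀, ..., k_N`,
a 1-form `Σ_p f_p k_p` being recorded as the tuple of coefficients `(f_p)`. -/
abbrev TorOmega (N : ℕ) := TorIdx N → TorR N

/-- The map `d : R → Ω_R`, `d f = Σ_p t_p (∂f/∂t_p) k_p`. -/
def dFull (N : ℕ) : TorR N →ₗ[ℂ] TorOmega N := LinearMap.pi fun p => dOp p

/-- The space `K = Ω_R / d(R)`. -/
abbrev TorK (N : ℕ) := TorOmega N ⧸ LinearMap.range (dFull N)

/-- The canonical projection `Ω_R → K`. -/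
def kcl {N : ℕ} (ω : TorOmega N) : TorK N := Submodule.Quotient.mk ω

/-- The multi-loop space `R ⊗ ġ`, realized as finitely supported functions
`ℤ^{N+1} →₀ ġ`; the element `t^r ⊗ x` is `Finsupp.single r x`. -/
abbrev TorLoop (N : ℕ) (g : Type*) [AddCommGroup g] [Module ℂ g] := (TorIdx N → ℤ) →₀ g

/-- The Lie algebra `D = ⊕_p R d_p` of vector fields on the torus; the vector field
`Σ_p f_p d_p` is recorded as the tuple of coefficients `(f_p)`. -/
abbrev TorD (N : ℕ) := TorIdx N → TorR N

/-- The divergence `Σ_p t_p ∂f_p/∂t_p` of a vector field `Σ_p f_p d_p`. -/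
def divMap (N : ℕ) : TorD N →ₗ[ℂ] TorR N := ∑ p, (dOp p).comp (LinearMap.proj p)

/-- The Kassel bracket on `(R ⊗ ġ) ⊕ K`:
`[f₁ ⊗ g₁, f₂ ⊗ g₂] = f₁f₂ ⊗ [g₁,g₂] + (g₁|g₂)·(class of f₂ d(f₁))`, with `K` central. -/
def kassel {N : ℕ} {g : Type*} [LieRing g] [LieAlgebra ℂ g]
    (B : LinearMap.BilinForm ℂ g) (x y : TorLoop N g × TorK N) :
    TorLoop N g × TorK N :=
  x.1.sum fun r a => y.1.sum fun m b =>
    (Finsupp.single (r + m) ⁅a, b⁆, B a b • kcl fun p => (r p : ℂ) • tpow (r + m))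

/-- The underlying space of the full toroidal Lie algebra `g(μ) = (R ⊗ ġ) ⊕ K ⊕ D`. -/
abbrev TorG (N : ℕ) (g : Type*) [AddCommGroup g] [Module ℂ g] :=
  TorLoop N g × TorK N × TorD N

section Generators

variable {N : ℕ} {g : Type*} [LieRing g] [LieAlgebra ℂ g]

/-- The element `t^r ⊗ x` of `(R ⊗ ġ) ⊕ K ⊕ D`. -/
def G1 (r : TorIdx N → ℤ) (x : g) : TorG N g := (Finsupp.single r x, 0, 0)

/-- The element of `(R ⊗ ġ) ⊕ K ⊕ D` given by the class of a 1-form `ω` in `K`. -/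
def GK (ω : TorOmega N) : TorG N g := (0, kcl ω, 0)

/-- The element `t^r d_a` of `(R ⊗ ġ) ⊕ K ⊕ D`. -/
def G3 (r : TorIdx N → ℤ) (a : TorIdx N) : TorG N g := (0, 0, Pi.single a (tpow r))

end Generators

/-- The defining properties of the bracket of the full toroidal Lie algebra `g(μ)`:
bilinearity, the structure formulas
`[f₁⊗g₁, f₂⊗g₂] = f₁f₂⊗[g₁,g₂] + (g₁|g₂) f₂ d(f₁)`, `K` central in `(R⊗ġ)⊕K`,
`[t^r d_a, t^m⊗g] = m_a t^{r+m}⊗g`,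
`[t^r d_a, t^m k_b] = m_a t^{r+m} k_b + δ_{ab} Σ_p r_p t^{r+m} k_p`,
`[t^r d_a, t^m d_b] = m_a t^{r+m} d_b − r_b t^{r+m} d_a + μ m_a r_b Σ_p m_p t^{r+m} k_p`,
together with the bracket being alternating and satisfying the Jacobi identity. -/
def IsToroidalBracket {N : ℕ} {g : Type*} [LieRing g] [LieAlgebra ℂ g]
    (B : LinearMap.BilinForm ℂ g) (μ : ℂ)
    (br : TorG N g → TorG N g → TorG N g) : Prop :=
  -- bilinearity
  (∀ y : TorG N g, IsLinearMap ℂ fun x => br x y) ∧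
  (∀ x : TorG N g, IsLinearMap ℂ fun y => br x y) ∧
  -- alternating
  (∀ x : TorG N g, br x x = 0) ∧
  -- Jacobi identity
  (∀ x y z : TorG N g, br (br x y) z + br (br y z) x + br (br z x) y = 0) ∧
  -- `[t^r ⊗ x, t^m ⊗ y] = t^{r+m} ⊗ [x,y] + (x|y)·(class of t^m d(t^r))`
  (∀ (r m : TorIdx N → ℤ) (x y : g),
    br (G1 r x) (G1 m y)
      = (Finsupp.single (r + m) ⁅x, y⁆,
          B x y • kcl fun p => (r p : ℂ) • tpow (r + m), 0)) ∧
  -- `K` is central in `(R ⊗ ġ) ⊕ K`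
  (∀ (r : TorIdx N → ℤ) (x : g) (ω : TorOmega N),
    br (G1 r x) (GK ω) = 0 ∧ br (GK ω) (G1 r x) = 0) ∧
  (∀ ω ω' : TorOmega N, br (GK ω) (GK ω') = 0) ∧
  -- `[t^r d_a, t^m ⊗ y] = m_a t^{r+m} ⊗ y`
  (∀ (r : TorIdx N → ℤ) (a : TorIdx N) (m : TorIdx N → ℤ) (y : g),
    br (G3 r a) (G1 m y) = ((m a : ℂ) • Finsupp.single (r + m) y, 0, 0)) ∧
  -- `[t^r d_a, t^m k_b] = m_a t^{r+m} k_b + δ_{ab} Σ_p r_p t^{r+m} k_p`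
  (∀ (r : TorIdx N → ℤ) (a : TorIdx N) (m : TorIdx N → ℤ) (b : TorIdx N),
    br (G3 r a) (GK (Pi.single b (tpow m)))
      = (0, (m a : ℂ) • kcl (Pi.single b (tpow (r + m)))
          + (if a = b then kcl fun p => (r p : ℂ) • tpow (r + m) else 0), 0)) ∧
  -- `[t^r d_a, t^m d_b] = m_a t^{r+m} d_b − r_b t^{r+m} d_a + μ m_a r_b Σ_p m_p t^{r+m} k_p`
  (∀ (r : TorIdx N → ℤ) (a : TorIdx N) (m : TorIdx N → ℤ) (b : TorIdx N),
    br (G3 r a) (G3 m b)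
      = (0, (μ * (m a : ℂ) * (r b : ℂ)) • kcl fun p => (m p : ℂ) • tpow (r + m),
          (m a : ℂ) • (Pi.single b (tpow (r + m)) : TorD N)
            - (r b : ℂ) • (Pi.single a (tpow (r + m)) : TorD N)))


/-- The defining properties of the invariant bilinear form `B` on the toroidal extended
affine Lie algebra `g_div(μ) = (R⊗ġ) ⊕ K ⊕ D_div`: it is bilinear,
`B(t^r⊗g₁, t^m⊗g₂) = δ_{r,−m}(g₁|g₂)`,
`B(Σ_p a_p t^r d_p, t^m k_q) = δ_{r,−m} a_q = B(t^m k_q, Σ_p a_p t^r d_p)` for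
divergence-zero vector fields, and it vanishes on `(R⊗ġ) × (K ⊕ D_div)`,
on `D_div × D_div` and on `K × K`. -/
def IsToroidalForm {N : ℕ} {g : Type*} [LieRing g] [LieAlgebra ℂ g]
    (B : LinearMap.BilinForm ℂ g) (Bf : TorG N g → TorG N g → ℂ) : Prop :=
  -- bilinearity
  (∀ y : TorG N g, IsLinearMap ℂ fun x => Bf x y) ∧
  (∀ x : TorG N g, IsLinearMap ℂ fun y => Bf x y) ∧
  -- `(t^r ⊗ g₁ | t^m ⊗ g₂) = δ_{r,−m} (g₁|g₂)`
  (∀ (r m : TorIdx N → ℤ) (x y : g),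
    Bf (G1 r x) (G1 m y) = if r + m = 0 then B x y else 0) ∧
  -- `(Σ_p a_p t^r d_p | t^m k_q) = δ_{r,−m} a_q`, both ways, for divergence-zero fields
  (∀ (a : TorIdx N → ℂ) (r : TorIdx N → ℤ), (∑ p, a p * (r p : ℂ)) = 0 →
    ∀ (m : TorIdx N → ℤ) (q : TorIdx N),
      Bf (0, 0, fun p => a p • tpow r) (GK (Pi.single q (tpow m)))
        = (if r + m = 0 then a q else 0) ∧
      Bf (GK (Pi.single q (tpow m))) (0, 0, fun p => a p • tpow r)
        = (if r + m = 0 then a q else 0)) ∧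
  -- `(R ⊗ ġ | K ⊕ D_div) = 0`
  (∀ (u : TorLoop N g) (k : TorK N) (X : TorD N), divMap N X = 0 →
    Bf (u, 0, 0) (0, k, X) = 0 ∧ Bf (0, k, X) (u, 0, 0) = 0) ∧
  -- `(D_div | D_div) = 0`
  (∀ X Y : TorD N, divMap N X = 0 → divMap N Y = 0 →
    Bf (0, 0, X) (0, 0, Y) = 0) ∧
  -- `(K | K) = 0`
  (∀ k k' : TorK N, Bf (0, k, 0) (0, k', 0) = 0)
section AuxDefs

variable {N : ℕ} {g : Type*} [LieRing g] [LieAlgebra ℂ g]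

/-- Divergence-zero monomial vector field generator. -/
def Dgen (a : TorIdx N → ℂ) (r : TorIdx N → ℤ) : TorG N g := (0, 0, fun p => a p • tpow r)

/-- Spanning set of `g_div`. -/
def Sgen (N : ℕ) (g : Type*) [LieRing g] [LieAlgebra ℂ g] : Set (TorG N g) :=
  {v | ∃ r x, v = G1 r x} ∪ {v | ∃ q m, v = GK (Pi.single q (tpow m))} ∪
    {v | ∃ a r, (∑ p, a p * (r p : ℂ)) = 0 ∧ v = Dgen a r}

lemma dOp_apply (p : TorIdx N) (f : TorR N) (m : TorIdx N → ℤ) :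
    dOp p f m = (m p : ℂ) * f m := by
  classical
  simp only [dOp, Finsupp.lsum_apply, Finsupp.sum_apply, LinearMap.smul_apply,
    Finsupp.lsingle_apply, Finsupp.smul_apply, Finsupp.single_apply, smul_eq_mul, mul_ite, mul_zero]
  rw [Finsupp.sum_ite_eq' f m (fun r c => (r p : ℂ) * c)]
  simp only [Finsupp.mem_support_iff, ite_not]
  split
  · simp [*]
  · rfl

lemma divMap_apply (X : TorD N) (m : TorIdx N → ℤ) :
    divMap N X m = ∑ p, (m p : ℂ) * X p m := by
  simp only [divMap, LinearMap.sum_apply, LinearMap.comp_apply, LinearMap.proj_apply]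
  rw [Finsupp.finset_sum_apply]
  exact Finset.sum_congr rfl fun p _ => dOp_apply p (X p) m

lemma div_zero_coeff {X : TorD N} (hX : divMap N X = 0) (m : TorIdx N → ℤ) :
    ∑ p, X p m * (m p : ℂ) = 0 := by
  have := congrArg (fun f : TorR N => f m) hX
  simp only [divMap_apply, Finsupp.coe_zero, Pi.zero_apply] at this
  rw [← this]
  exact Finset.sum_congr rfl fun p _ => mul_comm _ _

lemma finsupp_sum_superset {α M : Type*} [DecidableEq α] [AddCommGroup M] (T : Finset α)
    (f : α →₀ M) (hT : f.support ⊆ T) : ∑ m ∈ T, Finsupp.single m (f m) = f := by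
  ext m'
  rw [Finsupp.finset_sum_apply]
  simp only [Finsupp.single_apply]
  rw [Finset.sum_ite_eq' T m' (fun m => f m)]
  by_cases h : m' ∈ T
  · simp [h]
  · simp [h, Finsupp.notMem_support_iff.mp (fun hc => h (hT hc))]

lemma finsupp_eq_sum_smul_tpow (f : TorR N) (T : Finset (TorIdx N → ℤ)) (hT : f.support ⊆ T) :
    f = ∑ m ∈ T, f m • tpow m := by
  have : ∀ m, f m • tpow m = Finsupp.single m (f m) := fun m => by
    rw [tpow, Finsupp.smul_single, smul_eq_mul, mul_one]
  rw [Finset.sum_congr rfl fun m _ => this m]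
  exact (finsupp_sum_superset T f hT).symm

lemma mem_span_Sgen (v : TorG N g) (hv : divMap N v.2.2 = 0) :
    v ∈ Submodule.span ℂ (Sgen N g) := by
  classical
  obtain ⟨u, k, X⟩ := v
  simp only at hv
  have h1 : ((u, 0, 0) : TorG N g) ∈ Submodule.span ℂ (Sgen N g) := by
    have he : ((u, 0, 0) : TorG N g) = ∑ r ∈ u.support, G1 r (u r) := by
      refine Prod.ext ?_ (Prod.ext ?_ ?_)
      · rw [Prod.fst_sum]
        simp only [G1]
        exact (Finsupp.sum_single u).symm
      · simp [Prod.snd_sum, Prod.fst_sum, G1]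
      · simp [Prod.snd_sum, G1]
    rw [he]
    exact Submodule.sum_mem _ fun r _ => Submodule.subset_span (Or.inl (Or.inl ⟨r, u r, rfl⟩))
  have h2 : ((0, k, 0) : TorG N g) ∈ Submodule.span ℂ (Sgen N g) := by
    obtain ⟨ω, rfl⟩ := Submodule.Quotient.mk_surjective _ k
    have hω : ω = ∑ q, ∑ m ∈ (ω q).support, (ω q) m • (Pi.single q (tpow m) : TorOmega N) := by
      funext p
      rw [Finset.sum_apply]
      have hq : ∀ q, (∑ m ∈ (ω q).support, (ω q) m • (Pi.single q (tpow m) : TorOmega N)) p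
          = if q = p then ω q else 0 := by
        intro q
        rw [Finset.sum_apply]
        by_cases h : q = p
        · subst h
          simp only [if_pos]
          calc ∑ m ∈ (ω q).support, ((ω q) m • (Pi.single q (tpow m) : TorOmega N)) q
              = ∑ m ∈ (ω q).support, (ω q) m • tpow m := by
                refine Finset.sum_congr rfl fun m _ => ?_
                rw [Pi.smul_apply, Pi.single_eq_same]
            _ = ω q := (finsupp_eq_sum_smul_tpow (ω q) _ le_rfl).symm
        · simp only [if_neg h, Pi.smul_apply, Pi.single_eq_of_ne (Ne.symm h), smul_zero,
            Finset.sum_const_zero]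
      rw [Finset.sum_congr rfl fun q _ => hq q, Finset.sum_ite_eq' Finset.univ p ω]
      simp
    set LGK : TorOmega N →ₗ[ℂ] TorG N g :=
      (0 : TorOmega N →ₗ[ℂ] TorLoop N g).prod
        (((LinearMap.range (dFull N)).mkQ).prod (0 : TorOmega N →ₗ[ℂ] TorD N)) with hLGK
    have hGK : ∀ ω' : TorOmega N, LGK ω' = GK ω' := by
      intro ω'; simp [hLGK, GK, kcl, LinearMap.prod_apply]
    rw [show ((0, Submodule.Quotient.mk ω, 0) : TorG N g) = LGK ω from (hGK ω).symm ▸ rfl]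
    rw [hω, map_sum]
    refine Submodule.sum_mem _ fun q _ => ?_
    rw [map_sum]
    refine Submodule.sum_mem _ fun m _ => ?_
    rw [map_smul, hGK]
    exact Submodule.smul_mem _ _ (Submodule.subset_span (Or.inl (Or.inr ⟨q, m, rfl⟩)))
  have h3 : ((0, 0, X) : TorG N g) ∈ Submodule.span ℂ (Sgen N g) := by
    set T : Finset (TorIdx N → ℤ) := Finset.univ.biUnion (fun p => (X p).support) with hTdef
    have hXe : ((0, 0, X) : TorG N g) = ∑ m ∈ T, (Dgen (fun p => X p m) m : TorG N g) := by
      refine Prod.ext ?_ (Prod.ext ?_ ?_)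
      · simp [Prod.fst_sum, Dgen]
      · simp [Prod.snd_sum, Prod.fst_sum, Dgen]
      · rw [Prod.snd_sum, Prod.snd_sum]
        funext p
        rw [Finset.sum_apply]
        exact finsupp_eq_sum_smul_tpow (X p) T
          (fun m hm => Finset.mem_biUnion.mpr ⟨p, Finset.mem_univ p, hm⟩)
    rw [hXe]
    refine Submodule.sum_mem _ fun m _ => Submodule.subset_span ?_
    exact Or.inr ⟨fun p => X p m, m, div_zero_coeff hv m, rfl⟩
  have hsplit : ((u, k, X) : TorG N g) = (u, 0, 0) + (0, k, 0) + (0, 0, X) := by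
    simp [Prod.ext_iff]
  rw [hsplit]
  exact add_mem (add_mem h1 h2) h3

end AuxDefs
section BracketAux

variable {N : ℕ} {g : Type*} [LieRing g] [LieAlgebra ℂ g]

lemma kcl_eq_mkQ (ω : TorOmega N) : (kcl ω : TorK N) = (LinearMap.range (dFull N)).mkQ ω := rfl

lemma kcl_sum {ι : Type*} (s : Finset ι) (f : ι → TorOmega N) :
    (kcl (∑ i ∈ s, f i) : TorK N) = ∑ i ∈ s, kcl (f i) := by
  simp only [kcl_eq_mkQ, map_sum]

lemma kcl_smul (c : ℂ) (ω : TorOmega N) : (kcl (c • ω) : TorK N) = c • kcl ω := by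
  simp only [kcl_eq_mkQ, map_smul]

lemma TorG_sum_mk {ι : Type*} (s : Finset ι) (f1 : ι → TorLoop N g) (f2 : ι → TorK N)
    (f3 : ι → TorD N) :
    ∑ i ∈ s, ((f1 i, f2 i, f3 i) : TorG N g)
      = (∑ i ∈ s, f1 i, ∑ i ∈ s, f2 i, ∑ i ∈ s, f3 i) := by
  refine Prod.ext ?_ (Prod.ext ?_ ?_) <;> simp [Prod.fst_sum, Prod.snd_sum]

lemma TorG_smul_mk (c : ℂ) (x1 : TorLoop N g) (x2 : TorK N) (x3 : TorD N) :
    c • ((x1, x2, x3) : TorG N g) = (c • x1, c • x2, c • x3) := rfl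

lemma Dgen_eq_sum (a : TorIdx N → ℂ) (r : TorIdx N → ℤ) :
    (Dgen a r : TorG N g) = ∑ p, a p • (G3 r p : TorG N g) := by
  have : ∀ p : TorIdx N, a p • (G3 r p : TorG N g)
      = ((0 : TorLoop N g), (0 : TorK N), Pi.single p (a p • tpow r)) := by
    intro p
    rw [G3, TorG_smul_mk, smul_zero, smul_zero, ← Pi.single_smul]
  rw [Finset.sum_congr rfl fun p _ => this p, TorG_sum_mk]
  simp only [Finset.sum_const_zero, Finset.univ_sum_single]
  rfl

variable {B : LinearMap.BilinForm ℂ g} {μ : ℂ} {br : TorG N g → TorG N g → TorG N g}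

lemma br_anti (hbr : IsToroidalBracket B μ br) (x y : TorG N g) : br x y = - br y x := by
  have h := hbr.2.2.1 (x + y)
  rw [(hbr.1 (x + y)).map_add] at h
  rw [(hbr.2.1 x).map_add, (hbr.2.1 y).map_add, hbr.2.2.1 x, hbr.2.2.1 y] at h
  have h2 : br x y + br y x = 0 := by
    have := h
    abel_nf at this ⊢
    linear_combination (norm := abel) this
  exact eq_neg_of_add_eq_zero_left h2

lemma br_Dgen_left (hbr : IsToroidalBracket B μ br) (a : TorIdx N → ℂ) (r : TorIdx N → ℤ)
    (y : TorG N g) : br (Dgen a r) y = ∑ p, a p • br (G3 r p) y := by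
  have hLa : ∀ x, br x y = IsLinearMap.mk' _ (hbr.1 y) x := fun x => rfl
  rw [hLa, Dgen_eq_sum, map_sum]
  exact Finset.sum_congr rfl fun p _ => by rw [map_smul, hLa]

lemma br_Dgen_right (hbr : IsToroidalBracket B μ br) (x : TorG N g) (a : TorIdx N → ℂ)
    (r : TorIdx N → ℤ) : br x (Dgen a r) = ∑ p, a p • br x (G3 r p) := by
  have hLa : ∀ y, br x y = IsLinearMap.mk' _ (hbr.2.1 x) y := fun y => rfl
  rw [hLa, Dgen_eq_sum, map_sum]
  exact Finset.sum_congr rfl fun p _ => by rw [map_smul, hLa]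

/-- `[Σ a_p t^r d_p, t^m ⊗ y] = (Σ a_p m_p) t^{r+m} ⊗ y`. -/
lemma br_Dgen_G1 (hbr : IsToroidalBracket B μ br) (a : TorIdx N → ℂ) (r m : TorIdx N → ℤ)
    (y : g) : br (Dgen a r) (G1 m y)
      = ((∑ p, a p * (m p : ℂ)) • Finsupp.single (r + m) y, 0, 0) := by
  rw [br_Dgen_left hbr]
  have : ∀ p : TorIdx N, a p • br (G3 r p) (G1 m y)
      = ((a p * (m p : ℂ)) • Finsupp.single (r + m) y, (0 : TorK N), (0 : TorD N)) := by
    intro p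
    rw [hbr.2.2.2.2.2.2.2.1 r p m y, TorG_smul_mk, smul_zero, smul_zero, smul_smul]
  rw [Finset.sum_congr rfl fun p _ => this p, TorG_sum_mk]
  refine Prod.ext ?_ (Prod.ext ?_ ?_)
  · rw [← Finset.sum_smul]
  · simp
  · simp

/-- `[Σ a_p t^r d_p, t^m k_q] = (Σ a_p m_p) t^{r+m} k_q + a_q Σ_p r_p t^{r+m} k_p`. -/
lemma br_Dgen_GK (hbr : IsToroidalBracket B μ br) (a : TorIdx N → ℂ) (r m : TorIdx N → ℤ)
    (q : TorIdx N) : br (Dgen a r) (GK (Pi.single q (tpow m)))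
      = (0, (∑ p, a p * (m p : ℂ)) • kcl (Pi.single q (tpow (r + m)))
          + a q • kcl (fun p => (r p : ℂ) • tpow (r + m)), 0) := by
  rw [br_Dgen_left hbr]
  have : ∀ p : TorIdx N, a p • br (G3 r p) (GK (Pi.single q (tpow m)))
      = ((0 : TorLoop N g), (a p * (m p : ℂ)) • kcl (Pi.single q (tpow (r + m)))
          + (if p = q then a p • kcl (fun p' => (r p' : ℂ) • tpow (r + m)) else 0),
          (0 : TorD N)) := by
    intro p
    rw [hbr.2.2.2.2.2.2.2.2.1 r p m q, TorG_smul_mk, smul_zero, smul_zero, smul_add, smul_smul]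
    congr 2
    split <;> simp
  rw [Finset.sum_congr rfl fun p _ => this p, TorG_sum_mk]
  rw [Finset.sum_add_distrib, ← Finset.sum_smul, Finset.sum_ite_eq' Finset.univ q]
  simp

/-- The bracket of two divergence-type monomial vector fields. -/
lemma br_Dgen_Dgen (hbr : IsToroidalBracket B μ br) (a b : TorIdx N → ℂ)
    (r s : TorIdx N → ℤ) : br (Dgen a r) (Dgen b s)
      = (0, (μ * (∑ p, a p * (s p : ℂ)) * (∑ p, b p * (r p : ℂ)))
            • kcl (fun p => (s p : ℂ) • tpow (r + s)),
          (∑ p, a p * (s p : ℂ)) • (fun p => b p • tpow (r + s) : TorD N)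
            - (∑ p, b p * (r p : ℂ)) • (fun p => a p • tpow (r + s) : TorD N)) := by
  rw [br_Dgen_left hbr]
  have h1 : ∀ p : TorIdx N, a p • br (G3 r p) (Dgen b s)
      = ((0 : TorLoop N g),
          ((a p * (s p : ℂ)) * (μ * (∑ p', b p' * (r p' : ℂ))))
            • kcl (fun p' => (s p' : ℂ) • tpow (r + s)),
          (a p * (s p : ℂ)) • (fun p' => b p' • tpow (r + s) : TorD N)
            - (a p * (∑ p', b p' * (r p' : ℂ))) • (Pi.single p (tpow (r + s)) : TorD N)) := by
    intro p
    rw [br_Dgen_right hbr]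
    have hsingle : ∀ p' : TorIdx N, (b p' * (s p : ℂ)) • (Pi.single p' (tpow (r + s)) : TorD N)
        = (s p : ℂ) • (Pi.single p' (b p' • tpow (r + s)) : TorD N) := by
      intro p'
      rw [Pi.single_smul, smul_smul, mul_comm]
    have h2 : ∀ p' : TorIdx N, b p' • br (G3 r p) (G3 s p')
        = ((0 : TorLoop N g),
            (b p' * (μ * (s p : ℂ) * (r p' : ℂ))) • kcl (fun p'' => (s p'' : ℂ) • tpow (r + s)),
            ((s p : ℂ)) • (Pi.single p' (b p' • tpow (r + s)) : TorD N)
              - (b p' * (r p' : ℂ)) • (Pi.single p (tpow (r + s)) : TorD N)) := by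
      intro p'
      rw [hbr.2.2.2.2.2.2.2.2.2 r p s p', TorG_smul_mk, smul_zero, smul_smul, smul_sub,
        smul_smul, smul_smul, hsingle]
    rw [Finset.sum_congr rfl fun p' _ => h2 p', TorG_sum_mk, TorG_smul_mk]
    simp only [Prod.mk.injEq]
    refine ⟨by simp, ?_, ?_⟩
    · rw [← Finset.sum_smul, smul_smul]
      congr 1
      have : ∀ p' : TorIdx N, b p' * (μ * (s p : ℂ) * (r p' : ℂ))
          = μ * (s p : ℂ) * (b p' * (r p' : ℂ)) := fun p' => by ring
      rw [Finset.sum_congr rfl fun p' _ => this p', ← Finset.mul_sum]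
      ring
    · rw [Finset.sum_sub_distrib, smul_sub]
      congr 1
      · rw [← Finset.smul_sum, Finset.univ_sum_single (fun p' => b p' • tpow (r + s)),
          smul_smul]
      · rw [← Finset.sum_smul (f := fun x => b x * (r x : ℂ))
            (x := (Pi.single p (tpow (r + s)) : TorD N)), smul_smul]
  rw [Finset.sum_congr rfl fun p _ => h1 p, TorG_sum_mk]
  simp only [Prod.mk.injEq]
  refine ⟨by simp, ?_, ?_⟩
  · rw [← Finset.sum_smul, ← Finset.sum_mul]
    congr 1
    ring
  · rw [Finset.sum_sub_distrib]
    congr 1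
    · rw [← Finset.sum_smul (f := fun x => a x * (s x : ℂ))
          (x := ((fun p' => b p' • tpow (r + s)) : TorD N))]
    · have : ∀ p : TorIdx N, (a p * (∑ p', b p' * (r p' : ℂ)))
            • (Pi.single p (tpow (r + s)) : TorD N)
          = (∑ p', b p' * (r p' : ℂ)) • (Pi.single p (a p • tpow (r + s)) : TorD N) := by
        intro p
        rw [Pi.single_smul, smul_smul, mul_comm]
      rw [Finset.sum_congr rfl fun p _ => this p, ← Finset.smul_sum,
        Finset.univ_sum_single (fun p => a p • tpow (r + s))]

end BracketAux
section FormAux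

variable {N : ℕ} {g : Type*} [LieRing g] [LieAlgebra ℂ g]

lemma div_Dgen_zero (a : TorIdx N → ℂ) (r : TorIdx N → ℤ) (h : (∑ p, a p * (r p : ℂ)) = 0) :
    divMap N (fun p => a p • tpow r : TorD N) = 0 := by
  ext m
  rw [divMap_apply]
  by_cases hm : m = r
  · subst hm
    have : ∀ p : TorIdx N, (m p : ℂ) * (a p • tpow m) m = a p * (m p : ℂ) := by
      intro p
      rw [tpow, Finsupp.smul_apply, Finsupp.single_eq_same, smul_eq_mul]
      ring
    rw [Finset.sum_congr rfl fun p _ => this p, h]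
    rfl
  · have : ∀ p : TorIdx N, (m p : ℂ) * (a p • tpow r) m = 0 := by
      intro p
      rw [tpow, Finsupp.smul_apply, Finsupp.single_apply, if_neg (fun hh => hm hh.symm)]
      simp
    rw [Finset.sum_congr rfl fun p _ => this p]
    simp

lemma Dfield_comb (C₁ C₂ : ℂ) (a b : TorIdx N → ℂ) (T : TorR N) :
    (C₁ • (fun p => b p • T) - C₂ • (fun p => a p • T) : TorD N)
      = fun p => (C₁ * b p - C₂ * a p) • T := by
  funext p
  simp only [Pi.sub_apply, Pi.smul_apply, smul_smul, sub_smul]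

lemma key_sum (a : TorIdx N → ℂ) (u v w : TorIdx N → ℤ) (h0 : u + v + w = 0)
    (hv : ∑ p, a p * (v p : ℂ) = 0) :
    ∑ p, a p * (u p : ℂ) = -∑ p, a p * (w p : ℂ) := by
  have hp : ∀ p, (u p : ℂ) = -(v p : ℂ) - (w p : ℂ) := by
    intro p
    have h := congrFun h0 p
    simp only [Pi.add_apply, Pi.zero_apply] at h
    have h2 : u p = -v p - w p := by omega
    rw [h2]
    push_cast
    ring
  calc ∑ p, a p * (u p : ℂ)
      = ∑ p, (-(a p * (v p : ℂ)) - a p * (w p : ℂ)) := by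
        refine Finset.sum_congr rfl fun p _ => by rw [hp p]; ring
    _ = -∑ p, a p * (v p : ℂ) - ∑ p, a p * (w p : ℂ) := by
        rw [Finset.sum_sub_distrib]
        congr 1
        exact Finset.sum_neg_distrib (fun p => a p * (v p : ℂ))
    _ = -∑ p, a p * (w p : ℂ) := by rw [hv]; ring

lemma Dcomb_constraint (a₁ a₂ : TorIdx N → ℂ) (r₁ r₂ : TorIdx N → ℤ)
    (h₁ : ∑ p, a₁ p * (r₁ p : ℂ) = 0) (h₂ : ∑ p, a₂ p * (r₂ p : ℂ) = 0) :
    ∑ p, ((∑ p', a₁ p' * (r₂ p' : ℂ)) * a₂ p - (∑ p', a₂ p' * (r₁ p' : ℂ)) * a₁ p)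
        * (((r₁ + r₂) p : ℂ)) = 0 := by
  have expand : ∀ p : TorIdx N,
      ((∑ p', a₁ p' * (r₂ p' : ℂ)) * a₂ p - (∑ p', a₂ p' * (r₁ p' : ℂ)) * a₁ p)
          * (((r₁ + r₂) p : ℂ))
        = (∑ p', a₁ p' * (r₂ p' : ℂ)) * (a₂ p * (r₁ p : ℂ))
            + (∑ p', a₁ p' * (r₂ p' : ℂ)) * (a₂ p * (r₂ p : ℂ))
            - ((∑ p', a₂ p' * (r₁ p' : ℂ)) * (a₁ p * (r₁ p : ℂ))
            + (∑ p', a₂ p' * (r₁ p' : ℂ)) * (a₁ p * (r₂ p : ℂ))) := by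
    intro p
    have : ((r₁ + r₂) p : ℂ) = (r₁ p : ℂ) + (r₂ p : ℂ) := by
      simp only [Pi.add_apply]
      push_cast
      ring
    rw [this]
    ring
  rw [Finset.sum_congr rfl fun p _ => expand p, Finset.sum_sub_distrib,
    Finset.sum_add_distrib, Finset.sum_add_distrib, ← Finset.mul_sum, ← Finset.mul_sum,
    ← Finset.mul_sum, ← Finset.mul_sum, h₁, h₂]
  ring

variable {B : LinearMap.BilinForm ℂ g} {Bf : TorG N g → TorG N g → ℂ}

lemma kcl_tpow_decomp (c : TorIdx N → ℂ) (m : TorIdx N → ℤ) :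
    ((0, kcl (fun p => c p • tpow m), 0) : TorG N g)
      = ∑ q, c q • (GK (Pi.single q (tpow m)) : TorG N g) := by
  have h1 : ∀ q : TorIdx N, c q • (GK (Pi.single q (tpow m)) : TorG N g)
      = ((0 : TorLoop N g), c q • kcl (Pi.single q (tpow m)), (0 : TorD N)) := by
    intro q
    rw [GK, TorG_smul_mk, smul_zero, smul_zero]
  rw [Finset.sum_congr rfl fun q _ => h1 q, TorG_sum_mk]
  simp only [Finset.sum_const_zero, Prod.mk.injEq]
  refine ⟨trivial, ?_, trivial⟩
  have h2 : ∀ q : TorIdx N, c q • (kcl (Pi.single q (tpow m)) : TorK N)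
      = kcl (Pi.single q (c q • tpow m)) := by
    intro q
    rw [← kcl_smul, ← Pi.single_smul]
  rw [Finset.sum_congr rfl fun q _ => h2 q, ← kcl_sum]
  congr 1
  exact (Finset.univ_sum_single (fun q => c q • tpow m)).symm

lemma Bf_kcl_Dgen (hBf : IsToroidalForm B Bf) (c : TorIdx N → ℂ) (m : TorIdx N → ℤ)
    (b : TorIdx N → ℂ) (s : TorIdx N → ℤ) (hb : (∑ p, b p * (s p : ℂ)) = 0) :
    Bf ((0, kcl (fun p => c p • tpow m), 0) : TorG N g) (Dgen b s)
      = if s + m = 0 then ∑ q, c q * b q else 0 := by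
  rw [kcl_tpow_decomp]
  have hL : ∀ v, Bf v (Dgen b s) = IsLinearMap.mk' _ (hBf.1 (Dgen b s)) v := fun v => rfl
  rw [hL, map_sum]
  have : ∀ q : TorIdx N, IsLinearMap.mk' _ (hBf.1 (Dgen b s)) (c q • (GK (Pi.single q (tpow m)) : TorG N g))
      = c q * (if s + m = 0 then b q else 0) := by
    intro q
    rw [map_smul, smul_eq_mul]
    congr 1
    rw [← hL]
    exact (hBf.2.2.2.1 b s hb m q).2
  rw [Finset.sum_congr rfl fun q _ => this q]
  by_cases h : s + m = 0
  · simp only [if_pos h, Finset.sum_congr]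
  · simp [if_neg h]

lemma Bf_Dgen_kcl (hBf : IsToroidalForm B Bf) (c : TorIdx N → ℂ) (m : TorIdx N → ℤ)
    (b : TorIdx N → ℂ) (s : TorIdx N → ℤ) (hb : (∑ p, b p * (s p : ℂ)) = 0) :
    Bf (Dgen b s) ((0, kcl (fun p => c p • tpow m), 0) : TorG N g)
      = if s + m = 0 then ∑ q, c q * b q else 0 := by
  rw [kcl_tpow_decomp]
  have hL : ∀ v, Bf (Dgen b s) v = IsLinearMap.mk' _ (hBf.2.1 (Dgen b s)) v := fun v => rfl
  rw [hL, map_sum]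
  have : ∀ q : TorIdx N, IsLinearMap.mk' _ (hBf.2.1 (Dgen b s)) (c q • (GK (Pi.single q (tpow m)) : TorG N g))
      = c q * (if s + m = 0 then b q else 0) := by
    intro q
    rw [map_smul, smul_eq_mul]
    congr 1
    rw [← hL]
    exact (hBf.2.2.2.1 b s hb m q).1
  rw [Finset.sum_congr rfl fun q _ => this q]
  by_cases h : s + m = 0
  · simp only [if_pos h, Finset.sum_congr]
  · simp [if_neg h]

end FormAux
section KappaAux

variable {N : ℕ} {g : Type*} [LieRing g] [LieAlgebra ℂ g]
variable {B : LinearMap.BilinForm ℂ g} {Bf : TorG N g → TorG N g → ℂ}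

lemma TorG_Kadd (k k' : TorK N) :
    ((0, k + k', 0) : TorG N g) = (0, k, 0) + (0, k', 0) := by
  refine Prod.ext ?_ (Prod.ext ?_ ?_) <;> simp

lemma TorG_Ksmul (C : ℂ) (k : TorK N) :
    ((0, C • k, 0) : TorG N g) = C • ((0, k, 0) : TorG N g) := by
  rw [TorG_smul_mk, smul_zero, smul_zero]

lemma Bf_kappa_Dgen (hBf : IsToroidalForm B Bf) (C aq : ℂ) (q : TorIdx N)
    (cvec : TorIdx N → ℂ) (M : TorIdx N → ℤ) (b : TorIdx N → ℂ) (s : TorIdx N → ℤ)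
    (hb : (∑ p, b p * (s p : ℂ)) = 0) :
    Bf ((0, C • kcl (Pi.single q (tpow M)) + aq • kcl (fun p => cvec p • tpow M), 0) : TorG N g)
        (Dgen b s)
      = if s + M = 0 then C * b q + aq * ∑ p, cvec p * b p else 0 := by
  have hL : ∀ v, Bf v (Dgen b s) = IsLinearMap.mk' _ (hBf.1 (Dgen b s)) v := fun v => rfl
  rw [TorG_Kadd, hL, map_add, TorG_Ksmul, TorG_Ksmul, map_smul, map_smul, ← hL, ← hL]
  have e1 : Bf ((0, kcl (Pi.single q (tpow M)), 0) : TorG N g) (Dgen b s)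
      = if s + M = 0 then b q else 0 := (hBf.2.2.2.1 b s hb M q).2
  have e2 : Bf ((0, kcl (fun p => cvec p • tpow M), 0) : TorG N g) (Dgen b s)
      = if s + M = 0 then ∑ p, cvec p * b p else 0 := Bf_kcl_Dgen hBf cvec M b s hb
  rw [smul_eq_mul, smul_eq_mul, e1, e2]
  by_cases h : s + M = 0 <;> simp [h]

lemma Bf_Dgen_kappa (hBf : IsToroidalForm B Bf) (C aq : ℂ) (q : TorIdx N)
    (cvec : TorIdx N → ℂ) (M : TorIdx N → ℤ) (b : TorIdx N → ℂ) (s : TorIdx N → ℤ)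
    (hb : (∑ p, b p * (s p : ℂ)) = 0) :
    Bf (Dgen b s)
        ((0, C • kcl (Pi.single q (tpow M)) + aq • kcl (fun p => cvec p • tpow M), 0) : TorG N g)
      = if s + M = 0 then C * b q + aq * ∑ p, cvec p * b p else 0 := by
  have hL : ∀ v, Bf (Dgen b s) v = IsLinearMap.mk' _ (hBf.2.1 (Dgen b s)) v := fun v => rfl
  rw [TorG_Kadd, hL, map_add, TorG_Ksmul, TorG_Ksmul, map_smul, map_smul, ← hL, ← hL]
  have e1 : Bf (Dgen b s) ((0, kcl (Pi.single q (tpow M)), 0) : TorG N g)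
      = if s + M = 0 then b q else 0 := (hBf.2.2.2.1 b s hb M q).1
  have e2 : Bf (Dgen b s) ((0, kcl (fun p => cvec p • tpow M), 0) : TorG N g)
      = if s + M = 0 then ∑ p, cvec p * b p else 0 := Bf_Dgen_kcl hBf cvec M b s hb
  rw [smul_eq_mul, smul_eq_mul, e1, e2]
  by_cases h : s + M = 0 <;> simp [h]

end KappaAux
section CompositeAux

variable {N : ℕ} {g : Type*} [LieRing g] [LieAlgebra ℂ g]
variable {B : LinearMap.BilinForm ℂ g} {Bf : TorG N g → TorG N g → ℂ}

lemma TorG_split (u : TorLoop N g) (k : TorK N) (X : TorD N) :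
    ((u, k, X) : TorG N g) = (u, 0, 0) + (0, k, 0) + (0, 0, X) := by
  refine Prod.ext ?_ (Prod.ext ?_ ?_) <;> simp

lemma Bf_Ak_Dgen (hBf : IsToroidalForm B Bf) (u : TorLoop N g) (C : ℂ)
    (cvec : TorIdx N → ℂ) (M' : TorIdx N → ℤ) (b : TorIdx N → ℂ) (s : TorIdx N → ℤ)
    (hb : (∑ p, b p * (s p : ℂ)) = 0) :
    Bf ((u, C • kcl (fun p => cvec p • tpow M'), 0) : TorG N g) (Dgen b s)
      = C * (if s + M' = 0 then ∑ q, cvec q * b q else 0) := by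
  rw [TorG_split, (hBf.1 _).map_add, (hBf.1 _).map_add]
  have e1 : Bf ((u, 0, 0) : TorG N g) (Dgen b s) = 0 :=
    (hBf.2.2.2.2.1 u 0 (fun p => b p • tpow s) (div_Dgen_zero b s hb)).1
  have e2 : Bf ((0, C • kcl (fun p => cvec p • tpow M'), 0) : TorG N g) (Dgen b s)
      = C * (if s + M' = 0 then ∑ q, cvec q * b q else 0) := by
    rw [TorG_Ksmul, (hBf.1 _).map_smul, Bf_kcl_Dgen hBf cvec M' b s hb, smul_eq_mul]
  have e3 : Bf ((0, 0, (0 : TorD N)) : TorG N g) (Dgen b s) = 0 := (hBf.1 _).map_zero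
  rw [e1, e2, e3]
  ring

lemma Bf_Dgen_Ak (hBf : IsToroidalForm B Bf) (u : TorLoop N g) (C : ℂ)
    (cvec : TorIdx N → ℂ) (M' : TorIdx N → ℤ) (b : TorIdx N → ℂ) (s : TorIdx N → ℤ)
    (hb : (∑ p, b p * (s p : ℂ)) = 0) :
    Bf (Dgen b s) ((u, C • kcl (fun p => cvec p • tpow M'), 0) : TorG N g)
      = C * (if s + M' = 0 then ∑ q, cvec q * b q else 0) := by
  rw [TorG_split, (hBf.2.1 _).map_add, (hBf.2.1 _).map_add]
  have e1 : Bf (Dgen b s) ((u, 0, 0) : TorG N g) = 0 :=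
    (hBf.2.2.2.2.1 u 0 (fun p => b p • tpow s) (div_Dgen_zero b s hb)).2
  have e2 : Bf (Dgen b s) ((0, C • kcl (fun p => cvec p • tpow M'), 0) : TorG N g)
      = C * (if s + M' = 0 then ∑ q, cvec q * b q else 0) := by
    rw [TorG_Ksmul, (hBf.2.1 _).map_smul, Bf_Dgen_kcl hBf cvec M' b s hb, smul_eq_mul]
  have e3 : Bf (Dgen b s) ((0, 0, (0 : TorD N)) : TorG N g) = 0 := (hBf.2.1 _).map_zero
  rw [e1, e2, e3]
  ring

lemma cond_iff {α : Type*} [AddCommGroup α] {x y : α} (h : x = y) : x = 0 ↔ y = 0 := by rw [h]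

end CompositeAux
/-- For every `μ ∈ ℂ`, the bilinear form `B` on the toroidal extended
affine Lie algebra `g_div(μ) = (R⊗ġ) ⊕ K ⊕ D_div` is symmetric and invariant:
`B([x,y],z) = B(x,[y,z])` for all `x, y, z ∈ g_div(μ)`. -/
theorem statement6 (N : ℕ) (hN : 1 ≤ N) (g : Type*) [LieRing g] [LieAlgebra ℂ g]
    [FiniteDimensional ℂ g] [LieAlgebra.IsSimple ℂ g]
    (B : LinearMap.BilinForm ℂ g)
    (hsymm : ∀ x y : g, B x y = B y x)
    (hinv : ∀ x y z : g, B ⁅x, y⁆ z = B x ⁅y, z⁆)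
    (hnd : ∀ x : g, x ≠ 0 → ∃ y : g, B x y ≠ 0)
    (μ : ℂ) (br : TorG N g → TorG N g → TorG N g)
    (hbr : IsToroidalBracket B μ br)
    (Bf : TorG N g → TorG N g → ℂ)
    (hBf : IsToroidalForm B Bf) :
    ∀ x y z : TorG N g,
      divMap N x.2.2 = 0 → divMap N y.2.2 = 0 → divMap N z.2.2 = 0 →
      Bf x y = Bf y x ∧ Bf (br x y) z = Bf x (br y z) := by
  classical
  have hfl := hBf.1
  have hfr := hBf.2.1
  have fAA := hBf.2.2.1
  have fDK := hBf.2.2.2.1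
  have fAperp := hBf.2.2.2.2.1
  have fDD := hBf.2.2.2.2.2.1
  have fKK := hBf.2.2.2.2.2.2
  have hbl := hbr.1
  have hbrr := hbr.2.1
  have hAAb := hbr.2.2.2.2.1
  have hAKb := hbr.2.2.2.2.2.1
  have hKKb := hbr.2.2.2.2.2.2.1
  have brDG1 := br_Dgen_G1 hbr
  have brDGK := br_Dgen_GK hbr
  have brDD := br_Dgen_Dgen hbr
  have branti := br_anti hbr
  have h0div : divMap N (0 : TorD N) = 0 := map_zero _
  have Bf0L : ∀ z : TorG N g, Bf 0 z = 0 := fun z => (hfl z).map_zero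
  have Bf0R : ∀ x : TorG N g, Bf x 0 = 0 := fun x => (hfr x).map_zero
  have br0L : ∀ x : TorG N g, br 0 x = 0 := fun x => (hbl x).map_zero
  have br0R : ∀ x : TorG N g, br x 0 = 0 := fun x => (hbrr x).map_zero
  have BfnegR : ∀ x v : TorG N g, Bf x (-v) = -Bf x v := fun x v => (hfr x).map_neg v
  have BfnegL : ∀ v z : TorG N g, Bf (-v) z = -Bf v z := fun v z => (hfl z).map_neg v
  have BfsmulL : ∀ (c : ℂ) (v z : TorG N g), Bf (c • v) z = c * Bf v z := fun c v z => by
    rw [(hfl z).map_smul, smul_eq_mul]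
  have BfsmulR : ∀ (x : TorG N g) (c : ℂ) (v : TorG N g), Bf x (c • v) = c * Bf x v :=
    fun x c v => by rw [(hfr x).map_smul, smul_eq_mul]
  have Esingle : ∀ (C : ℂ) (M : TorIdx N → ℤ) (w : g),
      ((C • Finsupp.single M w, 0, 0) : TorG N g)
        = C • ((Finsupp.single M w, 0, 0) : TorG N g) := by
    intro C M w
    rw [TorG_smul_mk, smul_zero, smul_zero]
  -- evaluation helpers
  have EA1 : ∀ (M : TorIdx N → ℤ) (w : g) (k : TorK N) (s : TorIdx N → ℤ) (z : g),
      Bf ((Finsupp.single M w, k, 0) : TorG N g) (G1 s z)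
        = if M + s = 0 then B w z else 0 := by
    intro M w k s z
    rw [TorG_split, (hfl _).map_add, (hfl _).map_add]
    have e1 : Bf ((Finsupp.single M w, 0, 0) : TorG N g) (G1 s z)
        = if M + s = 0 then B w z else 0 := fAA M s w z
    have e2 : Bf ((0, k, 0) : TorG N g) (G1 s z) = 0 :=
      (fAperp (Finsupp.single s z) k 0 h0div).2
    have e3 : Bf ((0, 0, (0 : TorD N)) : TorG N g) (G1 s z) = 0 := Bf0L _
    rw [e1, e2, e3]
    ring
  have EA2 : ∀ (r : TorIdx N → ℤ) (x : g) (M : TorIdx N → ℤ) (w : g) (k : TorK N),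
      Bf (G1 r x) ((Finsupp.single M w, k, 0) : TorG N g)
        = if r + M = 0 then B x w else 0 := by
    intro r x M w k
    rw [TorG_split, (hfr _).map_add, (hfr _).map_add]
    have e1 : Bf (G1 r x) ((Finsupp.single M w, 0, 0) : TorG N g)
        = if r + M = 0 then B x w else 0 := fAA r M x w
    have e2 : Bf (G1 r x) ((0, k, 0) : TorG N g) = 0 :=
      (fAperp (Finsupp.single r x) k 0 h0div).1
    have e3 : Bf (G1 r x) ((0, 0, (0 : TorD N)) : TorG N g) = 0 := Bf0R _
    rw [e1, e2, e3]
    ring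
  have EK1 : ∀ (u : TorLoop N g) (k k' : TorK N),
      Bf ((u, k, 0) : TorG N g) ((0, k', 0) : TorG N g) = 0 := by
    intro u k k'
    rw [TorG_split, (hfl _).map_add, (hfl _).map_add]
    have e1 : Bf ((u, 0, 0) : TorG N g) ((0, k', 0) : TorG N g) = 0 :=
      (fAperp u k' 0 h0div).1
    have e2 : Bf ((0, k, 0) : TorG N g) ((0, k', 0) : TorG N g) = 0 := fKK k k'
    have e3 : Bf ((0, 0, (0 : TorD N)) : TorG N g) ((0, k', 0) : TorG N g) = 0 := Bf0L _
    rw [e1, e2, e3]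
    ring
  have EK2 : ∀ (u : TorLoop N g) (k k' : TorK N),
      Bf ((0, k', 0) : TorG N g) ((u, k, 0) : TorG N g) = 0 := by
    intro u k k'
    rw [TorG_split u k 0, (hfr _).map_add, (hfr _).map_add]
    have e1 : Bf ((0, k', 0) : TorG N g) ((u, 0, 0) : TorG N g) = 0 :=
      (fAperp u k' 0 h0div).2
    have e2 : Bf ((0, k', 0) : TorG N g) ((0, k, 0) : TorG N g) = 0 := fKK k' k
    have e3 : Bf ((0, k', 0) : TorG N g) ((0, 0, (0 : TorD N)) : TorG N g) = 0 := Bf0R _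
    rw [e1, e2, e3]
    ring
  -- symmetry on generators
  have symGen : ∀ v ∈ Sgen N g, ∀ w ∈ Sgen N g, Bf v w = Bf w v := by
    intro v hv w hw
    simp only [Sgen, Set.mem_union, Set.mem_setOf_eq] at hv hw
    obtain (⟨r₁, x₁, rfl⟩ | ⟨q₁, m₁, rfl⟩) | ⟨a₁, r₁, h₁, rfl⟩ := hv <;>
      obtain (⟨r₂, x₂, rfl⟩ | ⟨q₂, m₂, rfl⟩) | ⟨a₂, r₂, h₂, rfl⟩ := hw
    · rw [fAA r₁ r₂ x₁ x₂, fAA r₂ r₁ x₂ x₁, hsymm x₁ x₂, add_comm r₂ r₁]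
    · have e1 : Bf (G1 r₁ x₁) (GK (Pi.single q₂ (tpow m₂))) = 0 :=
        (fAperp (Finsupp.single r₁ x₁) (kcl (Pi.single q₂ (tpow m₂))) 0 h0div).1
      have e2 : Bf (GK (Pi.single q₂ (tpow m₂))) (G1 r₁ x₁) = 0 :=
        (fAperp (Finsupp.single r₁ x₁) (kcl (Pi.single q₂ (tpow m₂))) 0 h0div).2
      rw [e1, e2]
    · have e1 : Bf (G1 r₁ x₁) (Dgen a₂ r₂) = 0 :=
        (fAperp (Finsupp.single r₁ x₁) 0 (fun p => a₂ p • tpow r₂)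
          (div_Dgen_zero a₂ r₂ h₂)).1
      have e2 : Bf (Dgen a₂ r₂) (G1 r₁ x₁) = 0 :=
        (fAperp (Finsupp.single r₁ x₁) 0 (fun p => a₂ p • tpow r₂)
          (div_Dgen_zero a₂ r₂ h₂)).2
      rw [e1, e2]
    · have e1 : Bf (GK (Pi.single q₁ (tpow m₁))) (G1 r₂ x₂) = 0 :=
        (fAperp (Finsupp.single r₂ x₂) (kcl (Pi.single q₁ (tpow m₁))) 0 h0div).2
      have e2 : Bf (G1 r₂ x₂) (GK (Pi.single q₁ (tpow m₁))) = 0 :=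
        (fAperp (Finsupp.single r₂ x₂) (kcl (Pi.single q₁ (tpow m₁))) 0 h0div).1
      rw [e1, e2]
    · have e1 : Bf (GK (Pi.single q₁ (tpow m₁))) (GK (Pi.single q₂ (tpow m₂))) = 0 :=
        fKK (kcl (Pi.single q₁ (tpow m₁))) (kcl (Pi.single q₂ (tpow m₂)))
      have e2 : Bf (GK (Pi.single q₂ (tpow m₂))) (GK (Pi.single q₁ (tpow m₁))) = 0 :=
        fKK (kcl (Pi.single q₂ (tpow m₂))) (kcl (Pi.single q₁ (tpow m₁)))
      rw [e1, e2]
    · have e1 : Bf (GK (Pi.single q₁ (tpow m₁))) (Dgen a₂ r₂)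
          = if r₂ + m₁ = 0 then a₂ q₁ else 0 := (fDK a₂ r₂ h₂ m₁ q₁).2
      have e2 : Bf (Dgen a₂ r₂) (GK (Pi.single q₁ (tpow m₁)))
          = if r₂ + m₁ = 0 then a₂ q₁ else 0 := (fDK a₂ r₂ h₂ m₁ q₁).1
      rw [e1, e2]
    · have e1 : Bf (Dgen a₁ r₁) (G1 r₂ x₂) = 0 :=
        (fAperp (Finsupp.single r₂ x₂) 0 (fun p => a₁ p • tpow r₁)
          (div_Dgen_zero a₁ r₁ h₁)).2
      have e2 : Bf (G1 r₂ x₂) (Dgen a₁ r₁) = 0 :=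
        (fAperp (Finsupp.single r₂ x₂) 0 (fun p => a₁ p • tpow r₁)
          (div_Dgen_zero a₁ r₁ h₁)).1
      rw [e1, e2]
    · have e1 : Bf (Dgen a₁ r₁) (GK (Pi.single q₂ (tpow m₂)))
          = if r₁ + m₂ = 0 then a₁ q₂ else 0 := (fDK a₁ r₁ h₁ m₂ q₂).1
      have e2 : Bf (GK (Pi.single q₂ (tpow m₂))) (Dgen a₁ r₁)
          = if r₁ + m₂ = 0 then a₁ q₂ else 0 := (fDK a₁ r₁ h₁ m₂ q₂).2
      rw [e1, e2]
    · have e1 : Bf (Dgen a₁ r₁) (Dgen a₂ r₂) = 0 :=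
        fDD (fun p => a₁ p • tpow r₁) (fun p => a₂ p • tpow r₂)
          (div_Dgen_zero a₁ r₁ h₁) (div_Dgen_zero a₂ r₂ h₂)
      have e2 : Bf (Dgen a₂ r₂) (Dgen a₁ r₁) = 0 :=
        fDD (fun p => a₂ p • tpow r₂) (fun p => a₁ p • tpow r₁)
          (div_Dgen_zero a₂ r₂ h₂) (div_Dgen_zero a₁ r₁ h₁)
      rw [e1, e2]
  -- more evaluation helpers
  have EG1K : ∀ (r : TorIdx N → ℤ) (x : g) (k : TorK N),
      Bf (G1 r x) ((0, k, 0) : TorG N g) = 0 := fun r x k =>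
    (fAperp (Finsupp.single r x) k 0 h0div).1
  have EKG1 : ∀ (r : TorIdx N → ℤ) (x : g) (k : TorK N),
      Bf ((0, k, 0) : TorG N g) (G1 r x) = 0 := fun r x k =>
    (fAperp (Finsupp.single r x) k 0 h0div).2
  have EGKk : ∀ (ω : TorOmega N) (k : TorK N),
      Bf (GK ω) ((0, k, 0) : TorG N g) = 0 := fun ω k => fKK (kcl ω) k
  have EkGK : ∀ (k : TorK N) (ω : TorOmega N),
      Bf ((0, k, 0) : TorG N g) (GK ω) = 0 := fun k ω => fKK k (kcl ω)
  have EKX_G1 : ∀ (k : TorK N) (X : TorD N), divMap N X = 0 →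
      ∀ (s : TorIdx N → ℤ) (z : g), Bf ((0, k, X) : TorG N g) (G1 s z) = 0 :=
    fun k X hX s z => (fAperp (Finsupp.single s z) k X hX).2
  have EkD_GK : ∀ (k : TorK N) (c : TorIdx N → ℂ) (M : TorIdx N → ℤ),
      (∑ p, c p * (M p : ℂ)) = 0 → ∀ (q : TorIdx N) (m : TorIdx N → ℤ),
      Bf ((0, k, fun p => c p • tpow M) : TorG N g) (GK (Pi.single q (tpow m)))
        = if M + m = 0 then c q else 0 := by
    intro k c M hc q m
    rw [TorG_split, (hfl _).map_add, (hfl _).map_add]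
    have e1 : Bf (((0 : TorLoop N g), (0 : TorK N), (0 : TorD N)) : TorG N g)
        (GK (Pi.single q (tpow m))) = 0 := Bf0L _
    have e2 : Bf ((0, k, 0) : TorG N g) (GK (Pi.single q (tpow m))) = 0 := fKK k _
    have e3 : Bf ((0, 0, fun p => c p • tpow M) : TorG N g) (GK (Pi.single q (tpow m)))
        = if M + m = 0 then c q else 0 := (fDK c M hc m q).1
    rw [e1, e2, e3]
    ring
  have EGK_kD : ∀ (q : TorIdx N) (m : TorIdx N → ℤ) (k : TorK N) (c : TorIdx N → ℂ)
      (M : TorIdx N → ℤ), (∑ p, c p * (M p : ℂ)) = 0 →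
      Bf (GK (Pi.single q (tpow m))) ((0, k, fun p => c p • tpow M) : TorG N g)
        = if M + m = 0 then c q else 0 := by
    intro q m k c M hc
    rw [TorG_split, (hfr _).map_add, (hfr _).map_add]
    have e1 : Bf (GK (Pi.single q (tpow m)))
        (((0 : TorLoop N g), (0 : TorK N), (0 : TorD N)) : TorG N g) = 0 := Bf0R _
    have e2 : Bf (GK (Pi.single q (tpow m))) ((0, k, 0) : TorG N g) = 0 := fKK _ k
    have e3 : Bf (GK (Pi.single q (tpow m))) ((0, 0, fun p => c p • tpow M) : TorG N g)
        = if M + m = 0 then c q else 0 := (fDK c M hc m q).2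
    rw [e1, e2, e3]
    ring
  have EkD_Dgen : ∀ (C : ℂ) (cvec : TorIdx N → ℂ) (M : TorIdx N → ℤ)
      (c : TorIdx N → ℂ) (Mx : TorIdx N → ℤ), (∑ p, c p * (Mx p : ℂ)) = 0 →
      ∀ (b : TorIdx N → ℂ) (s : TorIdx N → ℤ), (∑ p, b p * (s p : ℂ)) = 0 →
      Bf ((0, C • kcl (fun p => cvec p • tpow M), fun p => c p • tpow Mx) : TorG N g)
          (Dgen b s)
        = C * (if s + M = 0 then ∑ q, cvec q * b q else 0) := by
    intro C cvec M c Mx hc b s hb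
    rw [TorG_split, (hfl _).map_add, (hfl _).map_add]
    have e1 : Bf (((0 : TorLoop N g), (0 : TorK N), (0 : TorD N)) : TorG N g)
        (Dgen b s) = 0 := Bf0L _
    have e2 : Bf ((0, C • kcl (fun p => cvec p • tpow M), 0) : TorG N g) (Dgen b s)
        = C * (if s + M = 0 then ∑ q, cvec q * b q else 0) := by
      rw [TorG_Ksmul, BfsmulL, Bf_kcl_Dgen hBf cvec M b s hb]
    have e3 : Bf ((0, 0, fun p => c p • tpow Mx) : TorG N g) (Dgen b s) = 0 :=
      fDD (fun p => c p • tpow Mx) (fun p => b p • tpow s)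
        (div_Dgen_zero c Mx hc) (div_Dgen_zero b s hb)
    rw [e1, e2, e3]
    ring
  have EDgen_kD : ∀ (C : ℂ) (cvec : TorIdx N → ℂ) (M : TorIdx N → ℤ)
      (c : TorIdx N → ℂ) (Mx : TorIdx N → ℤ), (∑ p, c p * (Mx p : ℂ)) = 0 →
      ∀ (b : TorIdx N → ℂ) (s : TorIdx N → ℤ), (∑ p, b p * (s p : ℂ)) = 0 →
      Bf (Dgen b s)
          ((0, C • kcl (fun p => cvec p • tpow M), fun p => c p • tpow Mx) : TorG N g)
        = C * (if s + M = 0 then ∑ q, cvec q * b q else 0) := by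
    intro C cvec M c Mx hc b s hb
    rw [TorG_split, (hfr _).map_add, (hfr _).map_add]
    have e1 : Bf (Dgen b s)
        (((0 : TorLoop N g), (0 : TorK N), (0 : TorD N)) : TorG N g) = 0 := Bf0R _
    have e2 : Bf (Dgen b s) ((0, C • kcl (fun p => cvec p • tpow M), 0) : TorG N g)
        = C * (if s + M = 0 then ∑ q, cvec q * b q else 0) := by
      rw [TorG_Ksmul, BfsmulR, Bf_Dgen_kcl hBf cvec M b s hb]
    have e3 : Bf (Dgen b s) ((0, 0, fun p => c p • tpow Mx) : TorG N g) = 0 :=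
      fDD (fun p => b p • tpow s) (fun p => c p • tpow Mx)
        (div_Dgen_zero b s hb) (div_Dgen_zero c Mx hc)
    rw [e1, e2, e3]
    ring
  -- invariance on generators
  have invGen : ∀ x ∈ Sgen N g, ∀ y ∈ Sgen N g, ∀ z ∈ Sgen N g,
      Bf (br x y) z = Bf x (br y z) := by
    intro x hx y hy z hz
    simp only [Sgen, Set.mem_union, Set.mem_setOf_eq] at hx hy hz
    obtain (⟨r₁, x₁, rfl⟩ | ⟨q₁, m₁, rfl⟩) | ⟨a₁, r₁, h₁, rfl⟩ := hx <;>
      obtain (⟨r₂, x₂, rfl⟩ | ⟨q₂, m₂, rfl⟩) | ⟨a₂, r₂, h₂, rfl⟩ := hy <;>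
      obtain (⟨r₃, x₃, rfl⟩ | ⟨q₃, m₃, rfl⟩) | ⟨a₃, r₃, h₃, rfl⟩ := hz
    -- (A,A,A)
    · rw [hAAb r₁ r₂ x₁ x₂, hAAb r₂ r₃ x₂ x₃, EA1, EA2, hinv x₁ x₂ x₃, add_assoc r₁ r₂ r₃]
    -- (A,A,K)
    · rw [hAAb r₁ r₂ x₁ x₂, (hAKb r₂ x₂ (Pi.single q₃ (tpow m₃))).1, Bf0R]
      exact EK1 _ _ _
    -- (A,A,D)
    · rw [hAAb r₁ r₂ x₁ x₂, branti (G1 r₂ x₂) (Dgen a₃ r₃), brDG1 a₃ r₃ r₂ x₂, BfnegR,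
        Bf_Ak_Dgen hBf _ _ _ _ a₃ r₃ h₃, Esingle, BfsmulR, EA2]
      have hciff : (r₃ + (r₁ + r₂) = 0) ↔ (r₁ + (r₃ + r₂) = 0) := cond_iff (by abel)
      by_cases h : r₃ + (r₁ + r₂) = 0
      · rw [if_pos h, if_pos (hciff.mp h)]
        have k1 : ∑ p, a₃ p * (r₁ p : ℂ) = -∑ p, a₃ p * (r₂ p : ℂ) :=
          key_sum a₃ r₁ r₃ r₂
            (by rw [show r₁ + r₃ + r₂ = r₃ + (r₁ + r₂) from by abel]; exact h) h₃
        have c1 : ∑ q, (r₁ q : ℂ) * a₃ q = ∑ q, a₃ q * (r₁ q : ℂ) :=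
          Finset.sum_congr rfl fun q _ => mul_comm _ _
        rw [c1, k1]
        ring
      · rw [if_neg h, if_neg (fun hc => h (hciff.mpr hc))]
        ring
    -- (A,K,A)
    · rw [(hAKb r₁ x₁ (Pi.single q₂ (tpow m₂))).1, Bf0L,
        (hAKb r₃ x₃ (Pi.single q₂ (tpow m₂))).2, Bf0R]
    -- (A,K,K)
    · rw [(hAKb r₁ x₁ (Pi.single q₂ (tpow m₂))).1, Bf0L,
        hKKb (Pi.single q₂ (tpow m₂)) (Pi.single q₃ (tpow m₃)), Bf0R]
    -- (A,K,D)
    · rw [(hAKb r₁ x₁ (Pi.single q₂ (tpow m₂))).1, Bf0L,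
        branti (GK (Pi.single q₂ (tpow m₂))) (Dgen a₃ r₃), brDGK a₃ r₃ m₂ q₂, BfnegR,
        EG1K]
      ring
    -- (A,D,A)
    · rw [branti (G1 r₁ x₁) (Dgen a₂ r₂), brDG1 a₂ r₂ r₁ x₁, BfnegL, Esingle, BfsmulL,
        EA1, brDG1 a₂ r₂ r₃ x₃, Esingle, BfsmulR, EA2]
      have hciff : (r₂ + r₁ + r₃ = 0) ↔ (r₁ + (r₂ + r₃) = 0) := cond_iff (by abel)
      by_cases h : r₂ + r₁ + r₃ = 0
      · rw [if_pos h, if_pos (hciff.mp h)]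
        have k1 : ∑ p, a₂ p * (r₃ p : ℂ) = -∑ p, a₂ p * (r₁ p : ℂ) :=
          key_sum a₂ r₃ r₂ r₁
            (by rw [show r₃ + r₂ + r₁ = r₂ + r₁ + r₃ from by abel]; exact h) h₂
        rw [k1]
        ring
      · rw [if_neg h, if_neg (fun hc => h (hciff.mpr hc))]
        ring
    -- (A,D,K)
    · rw [branti (G1 r₁ x₁) (Dgen a₂ r₂), brDG1 a₂ r₂ r₁ x₁, BfnegL, Esingle, BfsmulL,
        brDGK a₂ r₂ m₃ q₃, EG1K]
      have e1 : Bf ((Finsupp.single (r₂ + r₁) x₁, 0, 0) : TorG N g)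
          (GK (Pi.single q₃ (tpow m₃))) = 0 :=
        (fAperp (Finsupp.single (r₂ + r₁) x₁) (kcl (Pi.single q₃ (tpow m₃))) 0 h0div).1
      rw [e1]
      ring
    -- (A,D,D)
    · rw [branti (G1 r₁ x₁) (Dgen a₂ r₂), brDG1 a₂ r₂ r₁ x₁, BfnegL, Esingle, BfsmulL,
        brDD a₂ a₃ r₂ r₃, Dfield_comb]
      have e1 : Bf ((Finsupp.single (r₂ + r₁) x₁, 0, 0) : TorG N g) (Dgen a₃ r₃) = 0 :=
        (fAperp (Finsupp.single (r₂ + r₁) x₁) 0 (fun p => a₃ p • tpow r₃)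
          (div_Dgen_zero a₃ r₃ h₃)).1
      have e2 : Bf (G1 r₁ x₁) ((0,
          (μ * (∑ p, a₂ p * (r₃ p : ℂ)) * (∑ p, a₃ p * (r₂ p : ℂ)))
            • kcl (fun p => (r₃ p : ℂ) • tpow (r₂ + r₃)),
          fun p => ((∑ p', a₂ p' * (r₃ p' : ℂ)) * a₃ p
            - (∑ p', a₃ p' * (r₂ p' : ℂ)) * a₂ p) • tpow (r₂ + r₃)) : TorG N g) = 0 :=
        (fAperp (Finsupp.single r₁ x₁) _ _
          (div_Dgen_zero _ (r₂ + r₃) (Dcomb_constraint a₂ a₃ r₂ r₃ h₂ h₃))).1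
      rw [e1, e2]
      ring
    -- (K,A,A)
    · rw [(hAKb r₂ x₂ (Pi.single q₁ (tpow m₁))).2, Bf0L, hAAb r₂ r₃ x₂ x₃]
      exact (EK2 _ _ _).symm
    -- (K,A,K)
    · rw [(hAKb r₂ x₂ (Pi.single q₁ (tpow m₁))).2, Bf0L,
        (hAKb r₂ x₂ (Pi.single q₃ (tpow m₃))).1, Bf0R]
    -- (K,A,D)
    · rw [(hAKb r₂ x₂ (Pi.single q₁ (tpow m₁))).2, Bf0L,
        branti (G1 r₂ x₂) (Dgen a₃ r₃), brDG1 a₃ r₃ r₂ x₂, BfnegR, Esingle, BfsmulR]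
      have e : Bf (GK (Pi.single q₁ (tpow m₁)))
          ((Finsupp.single (r₃ + r₂) x₂, 0, 0) : TorG N g) = 0 :=
        (fAperp (Finsupp.single (r₃ + r₂) x₂) (kcl (Pi.single q₁ (tpow m₁))) 0 h0div).2
      rw [e]
      ring
    -- (K,K,A)
    · rw [hKKb (Pi.single q₁ (tpow m₁)) (Pi.single q₂ (tpow m₂)), Bf0L,
        (hAKb r₃ x₃ (Pi.single q₂ (tpow m₂))).2, Bf0R]
    -- (K,K,K)
    · rw [hKKb (Pi.single q₁ (tpow m₁)) (Pi.single q₂ (tpow m₂)), Bf0L,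
        hKKb (Pi.single q₂ (tpow m₂)) (Pi.single q₃ (tpow m₃)), Bf0R]
    -- (K,K,D)
    · rw [hKKb (Pi.single q₁ (tpow m₁)) (Pi.single q₂ (tpow m₂)), Bf0L,
        branti (GK (Pi.single q₂ (tpow m₂))) (Dgen a₃ r₃), brDGK a₃ r₃ m₂ q₂, BfnegR,
        EGKk]
      ring
    -- (K,D,A)
    · rw [branti (GK (Pi.single q₁ (tpow m₁))) (Dgen a₂ r₂), brDGK a₂ r₂ m₁ q₁, BfnegL,
        EKG1, brDG1 a₂ r₂ r₃ x₃, Esingle, BfsmulR]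
      have e : Bf (GK (Pi.single q₁ (tpow m₁)))
          ((Finsupp.single (r₂ + r₃) x₃, 0, 0) : TorG N g) = 0 :=
        (fAperp (Finsupp.single (r₂ + r₃) x₃) (kcl (Pi.single q₁ (tpow m₁))) 0 h0div).2
      rw [e]
      ring
    -- (K,D,K)
    · rw [branti (GK (Pi.single q₁ (tpow m₁))) (Dgen a₂ r₂), brDGK a₂ r₂ m₁ q₁, BfnegL,
        EkGK, brDGK a₂ r₂ m₃ q₃, EGKk]
      ring
    -- (K,D,D)
    · rw [branti (GK (Pi.single q₁ (tpow m₁))) (Dgen a₂ r₂), brDGK a₂ r₂ m₁ q₁, BfnegL,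
        Bf_kappa_Dgen hBf _ _ _ _ _ a₃ r₃ h₃, brDD a₂ a₃ r₂ r₃, Dfield_comb,
        EGK_kD q₁ m₁ _ _ _ (Dcomb_constraint a₂ a₃ r₂ r₃ h₂ h₃)]
      have hciff : (r₃ + (r₂ + m₁) = 0) ↔ (r₂ + r₃ + m₁ = 0) := cond_iff (by abel)
      by_cases h : r₃ + (r₂ + m₁) = 0
      · rw [if_pos h, if_pos (hciff.mp h)]
        have k1 : ∑ p, a₂ p * (r₃ p : ℂ) = -∑ p, a₂ p * (m₁ p : ℂ) :=
          key_sum a₂ r₃ r₂ m₁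
            (by rw [show r₃ + r₂ + m₁ = r₃ + (r₂ + m₁) from by abel]; exact h) h₂
        have c1 : ∑ p, (r₂ p : ℂ) * a₃ p = ∑ p, a₃ p * (r₂ p : ℂ) :=
          Finset.sum_congr rfl fun p _ => mul_comm _ _
        rw [k1, c1]
        ring
      · rw [if_neg h, if_neg (fun hc => h (hciff.mpr hc))]
        ring
    -- (D,A,A)
    · rw [brDG1 a₁ r₁ r₂ x₂, Esingle, BfsmulL, EA1, hAAb r₂ r₃ x₂ x₃,
        Bf_Dgen_Ak hBf _ _ _ _ a₁ r₁ h₁]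
      have hciff : (r₁ + r₂ + r₃ = 0) ↔ (r₁ + (r₂ + r₃) = 0) := cond_iff (by abel)
      by_cases h : r₁ + r₂ + r₃ = 0
      · rw [if_pos h, if_pos (hciff.mp h)]
        have c1 : ∑ q, (r₂ q : ℂ) * a₁ q = ∑ q, a₁ q * (r₂ q : ℂ) :=
          Finset.sum_congr rfl fun q _ => mul_comm _ _
        rw [c1]
        ring
      · rw [if_neg h, if_neg (fun hc => h (hciff.mpr hc))]
        ring
    -- (D,A,K)
    · rw [brDG1 a₁ r₁ r₂ x₂, Esingle, BfsmulL,
        (hAKb r₂ x₂ (Pi.single q₃ (tpow m₃))).1, Bf0R]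
      have e : Bf ((Finsupp.single (r₁ + r₂) x₂, 0, 0) : TorG N g)
          (GK (Pi.single q₃ (tpow m₃))) = 0 :=
        (fAperp (Finsupp.single (r₁ + r₂) x₂) (kcl (Pi.single q₃ (tpow m₃))) 0 h0div).1
      rw [e]
      ring
    -- (D,A,D)
    · rw [brDG1 a₁ r₁ r₂ x₂, Esingle, BfsmulL,
        branti (G1 r₂ x₂) (Dgen a₃ r₃), brDG1 a₃ r₃ r₂ x₂, BfnegR, Esingle, BfsmulR]
      have e1 : Bf ((Finsupp.single (r₁ + r₂) x₂, 0, 0) : TorG N g) (Dgen a₃ r₃) = 0 :=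
        (fAperp (Finsupp.single (r₁ + r₂) x₂) 0 (fun p => a₃ p • tpow r₃)
          (div_Dgen_zero a₃ r₃ h₃)).1
      have e2 : Bf (Dgen a₁ r₁) ((Finsupp.single (r₃ + r₂) x₂, 0, 0) : TorG N g) = 0 :=
        (fAperp (Finsupp.single (r₃ + r₂) x₂) 0 (fun p => a₁ p • tpow r₁)
          (div_Dgen_zero a₁ r₁ h₁)).2
      rw [e1, e2]
      ring
    -- (D,K,A)
    · rw [brDGK a₁ r₁ m₂ q₂, EKG1, (hAKb r₃ x₃ (Pi.single q₂ (tpow m₂))).2, Bf0R]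
    -- (D,K,K)
    · rw [brDGK a₁ r₁ m₂ q₂, EkGK,
        hKKb (Pi.single q₂ (tpow m₂)) (Pi.single q₃ (tpow m₃)), Bf0R]
    -- (D,K,D)
    · rw [brDGK a₁ r₁ m₂ q₂, Bf_kappa_Dgen hBf _ _ _ _ _ a₃ r₃ h₃,
        branti (GK (Pi.single q₂ (tpow m₂))) (Dgen a₃ r₃), brDGK a₃ r₃ m₂ q₂, BfnegR,
        Bf_Dgen_kappa hBf _ _ _ _ _ a₁ r₁ h₁]
      have hciff : (r₃ + (r₁ + m₂) = 0) ↔ (r₁ + (r₃ + m₂) = 0) := cond_iff (by abel)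
      by_cases h : r₃ + (r₁ + m₂) = 0
      · rw [if_pos h, if_pos (hciff.mp h)]
        have k1 : ∑ p, a₁ p * (m₂ p : ℂ) = -∑ p, a₁ p * (r₃ p : ℂ) :=
          key_sum a₁ m₂ r₁ r₃
            (by rw [show m₂ + r₁ + r₃ = r₃ + (r₁ + m₂) from by abel]; exact h) h₁
        have c1 : ∑ p, (r₁ p : ℂ) * a₃ p = ∑ p, a₃ p * (r₁ p : ℂ) :=
          Finset.sum_congr rfl fun p _ => mul_comm _ _
        have k2 : ∑ p, a₃ p * (r₁ p : ℂ) = -∑ p, a₃ p * (m₂ p : ℂ) :=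
          key_sum a₃ r₁ r₃ m₂
            (by rw [show r₁ + r₃ + m₂ = r₃ + (r₁ + m₂) from by abel]; exact h) h₃
        have c2 : ∑ p, (r₃ p : ℂ) * a₁ p = ∑ p, a₁ p * (r₃ p : ℂ) :=
          Finset.sum_congr rfl fun p _ => mul_comm _ _
        rw [k1, c1, k2, c2]
        ring
      · rw [if_neg h, if_neg (fun hc => h (hciff.mpr hc))]
        ring
    -- (D,D,A)
    · rw [brDD a₁ a₂ r₁ r₂, Dfield_comb, brDG1 a₂ r₂ r₃ x₃, Esingle, BfsmulR,
        EKX_G1 _ _ (div_Dgen_zero _ (r₁ + r₂) (Dcomb_constraint a₁ a₂ r₁ r₂ h₁ h₂))]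
      have e2 : Bf (Dgen a₁ r₁) ((Finsupp.single (r₂ + r₃) x₃, 0, 0) : TorG N g) = 0 :=
        (fAperp (Finsupp.single (r₂ + r₃) x₃) 0 (fun p => a₁ p • tpow r₁)
          (div_Dgen_zero a₁ r₁ h₁)).2
      rw [e2]
      ring
    -- (D,D,K)
    · rw [brDD a₁ a₂ r₁ r₂, Dfield_comb,
        EkD_GK _ _ _ (Dcomb_constraint a₁ a₂ r₁ r₂ h₁ h₂) q₃ m₃,
        brDGK a₂ r₂ m₃ q₃, Bf_Dgen_kappa hBf _ _ _ _ _ a₁ r₁ h₁]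
      have hciff : (r₁ + r₂ + m₃ = 0) ↔ (r₁ + (r₂ + m₃) = 0) := cond_iff (by abel)
      by_cases h : r₁ + r₂ + m₃ = 0
      · rw [if_pos h, if_pos (hciff.mp h)]
        have k1 : ∑ p, a₂ p * (m₃ p : ℂ) = -∑ p, a₂ p * (r₁ p : ℂ) :=
          key_sum a₂ m₃ r₂ r₁
            (by rw [show m₃ + r₂ + r₁ = r₁ + r₂ + m₃ from by abel]; exact h) h₂
        have c1 : ∑ p, (r₂ p : ℂ) * a₁ p = ∑ p, a₁ p * (r₂ p : ℂ) :=
          Finset.sum_congr rfl fun p _ => mul_comm _ _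
        rw [k1, c1]
        ring
      · rw [if_neg h, if_neg (fun hc => h (hciff.mpr hc))]
    -- (D,D,D)
    · rw [brDD a₁ a₂ r₁ r₂, Dfield_comb,
        EkD_Dgen _ _ _ _ _ (Dcomb_constraint a₁ a₂ r₁ r₂ h₁ h₂) a₃ r₃ h₃,
        brDD a₂ a₃ r₂ r₃, Dfield_comb,
        EDgen_kD _ _ _ _ _ (Dcomb_constraint a₂ a₃ r₂ r₃ h₂ h₃) a₁ r₁ h₁]
      have hciff : (r₃ + (r₁ + r₂) = 0) ↔ (r₁ + (r₂ + r₃) = 0) := cond_iff (by abel)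
      by_cases h : r₃ + (r₁ + r₂) = 0
      · rw [if_pos h, if_pos (hciff.mp h)]
        have k1 : ∑ p, a₂ p * (r₁ p : ℂ) = -∑ p, a₂ p * (r₃ p : ℂ) :=
          key_sum a₂ r₁ r₂ r₃
            (by rw [show r₁ + r₂ + r₃ = r₃ + (r₁ + r₂) from by abel]; exact h) h₂
        have k2 : ∑ p, a₁ p * (r₂ p : ℂ) = -∑ p, a₁ p * (r₃ p : ℂ) :=
          key_sum a₁ r₂ r₁ r₃
            (by rw [show r₂ + r₁ + r₃ = r₃ + (r₁ + r₂) from by abel]; exact h) h₁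
        have c1 : ∑ q, (r₂ q : ℂ) * a₃ q = ∑ q, a₃ q * (r₂ q : ℂ) :=
          Finset.sum_congr rfl fun q _ => mul_comm _ _
        have c2 : ∑ q, (r₃ q : ℂ) * a₁ q = ∑ q, a₁ q * (r₃ q : ℂ) :=
          Finset.sum_congr rfl fun q _ => mul_comm _ _
        rw [k1, k2, c1, c2]
        ring
      · rw [if_neg h, if_neg (fun hc => h (hciff.mpr hc))]
        ring
  -- lifting
  have lift : ∀ f : TorG N g → ℂ, IsLinearMap ℂ f → (∀ v ∈ Sgen N g, f v = 0) →
      ∀ v ∈ Submodule.span ℂ (Sgen N g), f v = 0 := by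
    intro f hf h v hv
    have hle : Submodule.span ℂ (Sgen N g) ≤ LinearMap.ker (IsLinearMap.mk' f hf) :=
      Submodule.span_le.mpr fun w hw => LinearMap.mem_ker.mpr (h w hw)
    exact LinearMap.mem_ker.mp (hle hv)
  have hsym : ∀ v ∈ Submodule.span ℂ (Sgen N g), ∀ w ∈ Submodule.span ℂ (Sgen N g),
      Bf v w = Bf w v := by
    have stage1 : ∀ v ∈ Sgen N g, ∀ w ∈ Submodule.span ℂ (Sgen N g), Bf v w = Bf w v := by
      intro v hv w hw
      refine sub_eq_zero.mp (lift (fun t => Bf v t - Bf t v) ⟨?_, ?_⟩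
        (fun t ht => sub_eq_zero.mpr (symGen v hv t ht)) w hw)
      · intro a b
        beta_reduce
        rw [(hfr v).map_add, (hfl v).map_add]
        ring
      · intro c a
        beta_reduce
        rw [BfsmulR, BfsmulL, smul_eq_mul]
        ring
    intro v hv w hw
    refine sub_eq_zero.mp (lift (fun t => Bf t w - Bf w t) ⟨?_, ?_⟩
      (fun t ht => sub_eq_zero.mpr (stage1 t ht w hw)) v hv)
    · intro a b
      beta_reduce
      rw [(hfl w).map_add, (hfr w).map_add]
      ring
    · intro c a
      beta_reduce
      rw [BfsmulL, BfsmulR, smul_eq_mul]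
      ring
  have hinv3 : ∀ x ∈ Submodule.span ℂ (Sgen N g), ∀ y ∈ Submodule.span ℂ (Sgen N g),
      ∀ z ∈ Submodule.span ℂ (Sgen N g), Bf (br x y) z = Bf x (br y z) := by
    have stZ : ∀ x ∈ Sgen N g, ∀ y ∈ Sgen N g, ∀ z ∈ Submodule.span ℂ (Sgen N g),
        Bf (br x y) z = Bf x (br y z) := by
      intro x hx y hy z hz
      refine sub_eq_zero.mp (lift (fun t => Bf (br x y) t - Bf x (br y t)) ⟨?_, ?_⟩
        (fun t ht => sub_eq_zero.mpr (invGen x hx y hy t ht)) z hz)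
      · intro a b
        beta_reduce
        rw [(hfr (br x y)).map_add, (hbrr y).map_add, (hfr x).map_add]
        ring
      · intro c a
        beta_reduce
        rw [BfsmulR, (hbrr y).map_smul, BfsmulR, smul_eq_mul]
        ring
    have stY : ∀ x ∈ Sgen N g, ∀ y ∈ Submodule.span ℂ (Sgen N g),
        ∀ z ∈ Submodule.span ℂ (Sgen N g), Bf (br x y) z = Bf x (br y z) := by
      intro x hx y hy z hz
      refine sub_eq_zero.mp (lift (fun t => Bf (br x t) z - Bf x (br t z)) ⟨?_, ?_⟩
        (fun t ht => sub_eq_zero.mpr (stZ x hx t ht z hz)) y hy)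
      · intro a b
        beta_reduce
        rw [(hbrr x).map_add, (hfl z).map_add, (hbl z).map_add, (hfr x).map_add]
        ring
      · intro c a
        beta_reduce
        rw [(hbrr x).map_smul, BfsmulL, (hbl z).map_smul, BfsmulR, smul_eq_mul]
        ring
    intro x hx y hy z hz
    refine sub_eq_zero.mp (lift (fun t => Bf (br t y) z - Bf t (br y z)) ⟨?_, ?_⟩
      (fun t ht => sub_eq_zero.mpr (stY t ht y hy z hz)) x hx)
    · intro a b
      beta_reduce
      rw [(hbl y).map_add, (hfl z).map_add, (hfl (br y z)).map_add]
      ring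
    · intro c a
      beta_reduce
      rw [(hbl y).map_smul, BfsmulL, BfsmulL, smul_eq_mul]
      ring
  intro x y z hx hy hz
  exact ⟨hsym x (mem_span_Sgen x hx) y (mem_span_Sgen y hy),
    hinv3 x (mem_span_Sgen x hx) y (mem_span_Sgen y hy) z (mem_span_Sgen z hz)⟩
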